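/- arXiv:0705.3628 — 6 statements merged into one kernel-verified Lean document; each statement's English description precedes it below -/
import Mathlib

section
/- Under the induced SE(2) transformation of the six parameters (α₁,…,α₆) given by ᾱ₁ = α₁cos²θ + α₂sin²θ − 2α₃cosθsinθ − 2bα₄cosθ − 2bα₅sinθ + α₆b², ᾱ₂ = α₁sin²θ + α₂cos²θ + 2α₃cosθsinθ + 2aα₄sinθ − 2aα₅cosθ + α₆a², ᾱ₃ = (α₁−α₂)sinθcosθ + α₃(cos²θ−sin²θ) + (α₄a+α₅b)cosθ + (α₅a−α₄b)sinθ − α₆ab, ᾱ₄ = α₄cosθ + α₅sinθ − α₆b, ᾱ₅ = α₅cosθ − α₄sinθ − α₆a, ᾱ₆ = α₆, the function Δ₁ = (α₆(α₁−α₂) − α₄² + α₅²)² + 4(α₆α₃ + α₄α₅)² is invariant: Δ₁(ᾱ) = Δ₁(α) for all θ, a, b ∈ ℝ. -/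
/-- Δ₁ is invariant under the induced SE(2) action. -/
theorem Delta1_invariant (α1 α2 α3 α4 α5 α6 θ a b : ℝ) :
    let c := Real.cos θ
    let s := Real.sin θ
    let β1 := α1*c^2 + α2*s^2 - 2*α3*c*s - 2*b*α4*c - 2*b*α5*s + α6*b^2
    let β2 := α1*s^2 + α2*c^2 + 2*α3*c*s + 2*a*α4*s - 2*a*α5*c + α6*a^2
    let β3 := (α1 - α2)*s*c + α3*(c^2 - s^2) + (α4*a + α5*b)*c + (α5*a - α4*b)*s - α6*a*b
    let β4 := α4*c + α5*s - α6*b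
    let β5 := α5*c - α4*s - α6*a
    let β6 := α6
    (β6*(β1 - β2) - β4^2 + β5^2)^2 + 4*(β6*β3 + β4*β5)^2
      = (α6*(α1 - α2) - α4^2 + α5^2)^2 + 4*(α6*α3 + α4*α5)^2 := by
  intro c s β1 β2 β3 β4 β5 β6
  have h : s^2 + c^2 - 1 = 0 := by
    simp only [c, s]; nlinarith [Real.sin_sq_add_cos_sq θ]
  simp only [β1, β2, β3, β4, β5, β6]
  linear_combination (α5^4 + α5^4*s^2 + α5^4*c^2 + (2)*α4^2*α5^2 + (2)*α4^2*α5^2*s^2 + (2)*α4^2*α5^2*c^2 + α4^4 + α4^4*s^2 + α4^4*c^2 + (8)*α3*α4*α5*α6 + (8)*α3*α4*α5*α6*s^2 + (8)*α3*α4*α5*α6*c^2 + (4)*α3^2*α6^2 + (4)*α3^2*α6^2*s^2 + (4)*α3^2*α6^2*c^2 + (-2)*α2*α5^2*α6 + (-2)*α2*α5^2*α6*s^2 + (-2)*α2*α5^2*α6*c^2 + (2)*α2*α4^2*α6 + (2)*α2*α4^2*α6*s^2 + (2)*α2*α4^2*α6*c^2 + α2^2*α6^2 + α2^2*α6^2*s^2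 + α2^2*α6^2*c^2 + (2)*α1*α5^2*α6 + (2)*α1*α5^2*α6*s^2 + (2)*α1*α5^2*α6*c^2 + (-2)*α1*α4^2*α6 + (-2)*α1*α4^2*α6*s^2 + (-2)*α1*α4^2*α6*c^2 + (-2)*α1*α2*α6^2 + (-2)*α1*α2*α6^2*s^2 + (-2)*α1*α2*α6^2*c^2 + α1^2*α6^2 + α1^2*α6^2*s^2 + α1^2*α6^2*c^2) * h
end

section
/- The function I₁(α₁,…,α₆) = α₆α₁ − α₄² is invariant under the full induced SE(2) action (rotations and translations) on the parameter space of Killing two-tensors in the Euclidean plane, when restricted to the invariant set where Δ₁ = (α₆(α₁−α₂) − α₄² + α₅²)² + 4(α₆α₃ + α₄α₅)² = 0. -/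
/-- on the invariant set Δ₁ = 0, the function I₁ = α₆α₁ − α₄² is invariant
under the full induced SE(2) action. -/
theorem polar_I1_invariant (α1 α2 α3 α4 α5 α6 θ a b : ℝ)
    (hΔ : (α6*(α1 - α2) - α4^2 + α5^2)^2 + 4*(α6*α3 + α4*α5)^2 = 0) :
    let c := Real.cos θ
    let s := Real.sin θ
    let β1 := α1*c^2 + α2*s^2 - 2*α3*c*s - 2*b*α4*c - 2*b*α5*s + α6*b^2
    let β4 := α4*c + α5*s - α6*b
    let β6 := α6
    β6*β1 - β4^2 = α6*α1 - α4^2 := by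
  intro c s β1 β4 β6
  have h1 : α6*(α1 - α2) - α4^2 + α5^2 = 0 := by nlinarith [sq_nonneg (α6*(α1 - α2) - α4^2 + α5^2), sq_nonneg (α6*α3 + α4*α5)]
  have h2 : α6*α3 + α4*α5 = 0 := by nlinarith [sq_nonneg (α6*(α1 - α2) - α4^2 + α5^2), sq_nonneg (α6*α3 + α4*α5)]
  have pyth : c^2 + s^2 = 1 := by
    simpa [c, s] using Real.sin_sq_add_cos_sq θ |>.symm ▸ (by rw [add_comm]; exact Real.cos_sq_add_sin_sq θ)
  simp only [β1, β4, β6]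
  linear_combination (α6*α1 - α4^2) * pyth - s^2*h1 - 2*c*s*h2
end

section
/- The functions I₁ = α₄² + α₅² and I₂ = 2α₃α₄α₅ + α₁α₅² + α₂α₄² are invariant under the induced SE(2) action restricted to the invariant set E₃¹ = {α₆ = 0, Δ₁ ≠ 0} (where on α₆ = 0 the action reads ᾱ₁ = α₁cos²θ + α₂sin²θ − 2α₃cosθsinθ − 2bα₄cosθ − 2bα₅sinθ, ᾱ₂ = α₁sin²θ + α₂cos²θ + 2α₃cosθsinθ + 2aα₄sinθ − 2aα₅cosθ, ᾱ₃ = (α₁−α₂)sinθcosθ + α₃(cos²θ−sin²θ) + (α₄a+α₅b)cosθ + (α₅a−α₄b)sinθ, ᾱ₄ = α₄cosθ + α₅sinθ, ᾱ₅ = α₅cosθ − α₄sinθ). -/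
/-- on E₃¹ = {α₆ = 0, Δ₁ ≠ 0}, the functions I₁ = α₄² + α₅² and
I₂ = 2α₃α₄α₅ + α₁α₅² + α₂α₄² are invariant under the induced SE(2) action. -/
theorem parabolic_invariants (α1 α2 α3 α4 α5 θ a b : ℝ)
    (hΔ : (α4^2 + α5^2)^2 ≠ 0) :
    let c := Real.cos θ
    let s := Real.sin θ
    let β1 := α1*c^2 + α2*s^2 - 2*α3*c*s - 2*b*α4*c - 2*b*α5*s
    let β2 := α1*s^2 + α2*c^2 + 2*α3*c*s + 2*a*α4*s - 2*a*α5*c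
    let β3 := (α1 - α2)*s*c + α3*(c^2 - s^2) + (α4*a + α5*b)*c + (α5*a - α4*b)*s
    let β4 := α4*c + α5*s
    let β5 := α5*c - α4*s
    β4^2 + β5^2 = α4^2 + α5^2 ∧
    2*β3*β4*β5 + β1*β5^2 + β2*β4^2 = 2*α3*α4*α5 + α1*α5^2 + α2*α4^2 := by
  intro c s β1 β2 β3 β4 β5
  have h : s ^ 2 + c ^ 2 = 1 := Real.sin_sq_add_cos_sq θ
  constructor
  · linear_combination (α4^2 + α5^2) * h
  · linear_combination (2*α3*α4*α5 + α2*α4^2 + α1*α5^2) * (1 + c^2 + s^2) * h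
end

section
/- The functions I₁ = α₆, I₂ = α₆(α₁+α₂) − α₄² − α₅², and I₃ = α₆(α₃² − α₁α₂) + α₄²α₂ + 2α₃α₄α₅ + α₁α₅² are invariant under the full induced SE(2) action on the parameter space of Killing two-tensors in the Euclidean plane. -/
/-- I₁ = α₆, I₂ = α₆(α₁+α₂) − α₄² − α₅², and
I₃ = α₆(α₃² − α₁α₂) + α₄²α₂ + 2α₃α₄α₅ + α₁α₅² are invariant under the full SE(2) action. -/
theorem EH_invariants (α1 α2 α3 α4 α5 α6 θ a b : ℝ) :
    let c := Real.cos θ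
    let s := Real.sin θ
    let β1 := α1*c^2 + α2*s^2 - 2*α3*c*s - 2*b*α4*c - 2*b*α5*s + α6*b^2
    let β2 := α1*s^2 + α2*c^2 + 2*α3*c*s + 2*a*α4*s - 2*a*α5*c + α6*a^2
    let β3 := (α1 - α2)*s*c + α3*(c^2 - s^2) + (α4*a + α5*b)*c + (α5*a - α4*b)*s - α6*a*b
    let β4 := α4*c + α5*s - α6*b
    let β5 := α5*c - α4*s - α6*a
    let β6 := α6
    β6 = α6 ∧
    β6*(β1 + β2) - β4^2 - β5^2 = α6*(α1 + α2) - α4^2 - α5^2 ∧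
    β6*(β3^2 - β1*β2) + β4^2*β2 + 2*β3*β4*β5 + β1*β5^2
      = α6*(α3^2 - α1*α2) + α4^2*α2 + 2*α3*α4*α5 + α1*α5^2 := by
  intro c s β1 β2 β3 β4 β5 β6
  have h : s^2 + c^2 = 1 := Real.sin_sq_add_cos_sq θ
  refine ⟨rfl, ?_, ?_⟩
  · show α6*(β1 + β2) - β4^2 - β5^2 = _
    simp only [β1, β2, β4, β5]
    linear_combination (-α5^2 - α4^2 + α2*α6 + α1*α6) * h
  · show α6*(β3^2 - β1*β2) + β4^2*β2 + 2*β3*β4*β5 + β1*β5^2 = _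
    simp only [β1, β2, β3, β4, β5]
    linear_combination (2*α3*α4*α5 + 2*α3*α4*α5*s^2 + 2*α3*α4*α5*c^2 + α3^2*α6
      + α3^2*α6*s^2 + α3^2*α6*c^2 + α2*α4^2 + α2*α4^2*s^2 + α2*α4^2*c^2
      + α1*α5^2 + α1*α5^2*s^2 + α1*α5^2*c^2 - α1*α2*α6 - α1*α2*α6*s^2
      - α1*α2*α6*c^2) * h
end

section
/- The set E₀ of points (α₁,…,α₆) fixed by every element of the induced SE(2) action on the Killing tensor parameter space is exactly the line {α₁ = α₂, α₃ = α₄ = α₅ = α₆ = 0}; equivalently, a point is fixed by all (θ, a, b) if and only if Δ₁ = Δ₂ = Δ₃ = 0 where Δ₁, Δ₂ = α₆, Δ₃ = (α₁−α₂)² + 4α₃² are as defined. -/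
/-- a parameter point is fixed by every element of the induced SE(2)
action iff it lies on the line α₁ = α₂, α₃ = α₄ = α₅ = α₆ = 0, equivalently iff
Δ₁ = Δ₂ = Δ₃ = 0. -/
theorem fixed_points_characterization (α1 α2 α3 α4 α5 α6 : ℝ) :
    ((∀ θ a b : ℝ,
        α1*(Real.cos θ)^2 + α2*(Real.sin θ)^2 - 2*α3*(Real.cos θ)*(Real.sin θ)
          - 2*b*α4*(Real.cos θ) - 2*b*α5*(Real.sin θ) + α6*b^2 = α1 ∧
        α1*(Real.sin θ)^2 + α2*(Real.cos θ)^2 + 2*α3*(Real.cos θ)*(Real.sin θ)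
          + 2*a*α4*(Real.sin θ) - 2*a*α5*(Real.cos θ) + α6*a^2 = α2 ∧
        (α1 - α2)*(Real.sin θ)*(Real.cos θ) + α3*((Real.cos θ)^2 - (Real.sin θ)^2)
          + (α4*a + α5*b)*(Real.cos θ) + (α5*a - α4*b)*(Real.sin θ) - α6*a*b = α3 ∧
        α4*(Real.cos θ) + α5*(Real.sin θ) - α6*b = α4 ∧
        α5*(Real.cos θ) - α4*(Real.sin θ) - α6*a = α5)
      ↔ (α1 = α2 ∧ α3 = 0 ∧ α4 = 0 ∧ α5 = 0 ∧ α6 = 0)) ∧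
    ((α1 = α2 ∧ α3 = 0 ∧ α4 = 0 ∧ α5 = 0 ∧ α6 = 0)
      ↔ ((α6*(α1 - α2) - α4^2 + α5^2)^2 + 4*(α6*α3 + α4*α5)^2 = 0 ∧ α6 = 0 ∧
          (α1 - α2)^2 + 4*α3^2 = 0)) := by
  constructor
  · constructor
    · intro h
      have h1 := h (Real.pi/2) 0 0
      have h2 := h 0 0 1
      simp [Real.cos_pi_div_two, Real.sin_pi_div_two] at h1 h2
      obtain ⟨e1, e2, e3, e4, e5⟩ := h1
      obtain ⟨f1, f2, f3, f4, f5⟩ := h2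
      refine ⟨by linarith, by linarith, by linarith, by linarith, by linarith⟩
    · rintro ⟨h1, h3, h4, h5, h6⟩
      intro θ a b
      subst h1 h3 h4 h5 h6
      have hs := Real.sin_sq_add_cos_sq θ
      refine ⟨by linear_combination α1 * hs, by linear_combination α1 * hs, by ring, by ring, by ring⟩
  · constructor
    · rintro ⟨h1, h3, h4, h5, h6⟩
      subst h3 h4 h5 h6
      rw [h1]
      norm_num
    · rintro ⟨h1, h6, h3⟩
      have hα3 : α3 = 0 := by nlinarith [sq_nonneg (α1 - α2), sq_nonneg α3]
      have hα12 : α1 = α2 := by nlinarith [sq_nonneg (α1 - α2), sq_nonneg α3]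
      rw [h6, hα3] at h1
      have e1 : α4^2 = α5^2 := by nlinarith [sq_nonneg (α5^2 - α4^2), sq_nonneg (α4*α5)]
      have e2 : α4*α5 = 0 := by nlinarith [sq_nonneg (α5^2 - α4^2), sq_nonneg (α4*α5)]
      have h4 : α5^4 = 0 := by linear_combination α4*α5*e2 - α5^2*e1
      have h5 : α5 = 0 := (pow_eq_zero_iff (by norm_num : (4:ℕ) ≠ 0)).mp h4
      have h4' : α4 = 0 := (pow_eq_zero_iff (by norm_num : (2:ℕ) ≠ 0)).mp (by rw [e1, h5]; ring)
      exact ⟨hα12, hα3, h4', h5, h6⟩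
end

section
/- If (α₁,…,α₆) satisfies α₆ ≠ 0 and ι₁ = α₆(α₁−α₂) − α₄² + α₅² > 0, then with θ₁ = −(1/2)arctan(2(α₃α₆ + α₄α₅)/ι₁), a₁ = (α₅cosθ₁ − α₄sinθ₁)/α₆, b₁ = (α₄cosθ₁ + α₅sinθ₁)/α₆, the transformed parameters under the induced SE(2) action with (θ,a,b) = (θ₁,a₁,b₁) satisfy ᾱ₃ = 0, ᾱ₄ = 0, ᾱ₅ = 0, i.e., the point is mapped to the elliptic-hyperbolic cross-section. -/
/-! The translation part (a₁, b₁) of the frame is chosen so that ᾱ₄ = ᾱ₅ = 0 outright; substituting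
it into ᾱ₃ leaves α₆ ᾱ₃ = (ι₁/2) sin 2θ + (α₃α₆ + α₄α₅) cos 2θ, and the rotation angle θ₁ is exactly
the root of this expression given by the arctangent. -/

open Real

lemma mul_sin_arctan_div {x : ℝ} (hx : x ≠ 0) (y : ℝ) :
    x * sin (arctan (y / x)) = y * cos (arctan (y / x)) := by
  have hcos : cos (arctan (y / x)) ≠ 0 := (cos_arctan_pos _).ne'
  rw [← div_mul_cancel₀ (sin _) hcos, ← tan_eq_sin_div_cos, tan_arctan]
  field_simp

lemma mul_sin_mul_cos_add_mul_cos_sq_sub_sin_sq_eq_zero {ι : ℝ} (hι : ι ≠ 0) (c : ℝ) {θ : ℝ}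
    (hθ : θ = -(1 / 2) * arctan (2 * c / ι)) :
    ι * (sin θ * cos θ) + c * (cos θ ^ 2 - sin θ ^ 2) = 0 := by
  have h2θ : 2 * θ = -arctan (2 * c / ι) := by rw [hθ]; ring
  have hsc : sin θ * cos θ = sin (2 * θ) / 2 := by rw [sin_two_mul]; ring
  rw [hsc, ← cos_two_mul', h2θ, sin_neg, cos_neg]
  linear_combination (-1 / 2 : ℝ) * mul_sin_arctan_div hι (2 * c)

lemma mul_alpha3_of_translation_frame {α6 : ℝ} (h6 : α6 ≠ 0) (α1 α2 α3 α4 α5 C S : ℝ) :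
    let a := (α5 * C - α4 * S) / α6
    let b := (α4 * C + α5 * S) / α6
    α6 * ((α1 - α2) * S * C + α3 * (C ^ 2 - S ^ 2) + (α4 * a + α5 * b) * C
        + (α5 * a - α4 * b) * S - α6 * a * b)
      = (α6 * (α1 - α2) - α4 ^ 2 + α5 ^ 2) * (S * C) + (α3 * α6 + α4 * α5) * (C ^ 2 - S ^ 2) := by
  intro a b
  simp only [a, b]
  field_simp
  ring

/-- if α₆ ≠ 0 and ι₁ = α₆(α₁−α₂) − α₄² + α₅² > 0, the moving-frame
parameters (θ₁, a₁, b₁) map the point onto the elliptic-hyperbolic cross-section: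
ᾱ₃ = ᾱ₄ = ᾱ₅ = 0. -/
theorem EH_moving_frame_normalizes (α1 α2 α3 α4 α5 α6 : ℝ) (h6 : α6 ≠ 0)
    (hι : α6*(α1 - α2) - α4^2 + α5^2 > 0) :
    let θ := -(1/2) * Real.arctan
      (2*(α3*α6 + α4*α5) / (α6*(α1 - α2) - α4^2 + α5^2))
    let a := (α5*Real.cos θ - α4*Real.sin θ) / α6
    let b := (α4*Real.cos θ + α5*Real.sin θ) / α6
    (α1 - α2)*(Real.sin θ)*(Real.cos θ) + α3*((Real.cos θ)^2 - (Real.sin θ)^2)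
        + (α4*a + α5*b)*(Real.cos θ) + (α5*a - α4*b)*(Real.sin θ) - α6*a*b = 0 ∧
    α4*(Real.cos θ) + α5*(Real.sin θ) - α6*b = 0 ∧
    α5*(Real.cos θ) - α4*(Real.sin θ) - α6*a = 0 := by
  intro θ a b
  have hrot := mul_sin_mul_cos_add_mul_cos_sq_sub_sin_sq_eq_zero hι.ne' (α3 * α6 + α4 * α5) rfl
  have hα3 := mul_alpha3_of_translation_frame h6 α1 α2 α3 α4 α5 (cos θ) (sin θ)
  refine ⟨?_, ?_, ?_⟩
  · exact (mul_eq_zero.mp (hα3.trans hrot)).resolve_left h6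
  · simp only [b, mul_div_cancel₀ _ h6, sub_self]
  · simp only [a, mul_div_cancel₀ _ h6, sub_self]
end
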